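/- Let μ = Σ_{q=1}^{c} λ_q · (P_{I^q_{n_q}} ∘ ⋯ ∘ P_{I^q_1}) be a projection matrix polynomial on Row(A) with all weights λ_q > 0. If μ is complete, i.e. there exists some term q₀ whose index sets satisfy span{v_h : h ∈ I^{q₀}_1 ∪ ⋯ ∪ I^{q₀}_{n_{q₀}}} = Row(A), then the operator norm of μ restricted to Row(A) is strictly less than its weight ⌈μ⌉ = Σ_{q=1}^{c} λ_q; that is, for every nonzero x ∈ Row(A), ‖μ(x)‖ < (Σ_{q=1}^{c} λ_q)·‖x‖. -/

import Mathlib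

/-!
Each `P_I` is an orthogonal projection, so it does not increase norms and preserves the norm
of `x` only when it fixes `x`. Hence every term of `μ` has norm at most `‖x‖`, and a term whose
norm equals `‖x‖` must fix `x` at every step, i.e. `x` is orthogonal to all rows it uses. For the
complete term this forces `x ⊥ Row(A)`, impossible for `0 ≠ x ∈ Row(A)`; so that term loses
norm strictly, and by the triangle inequality so does `μ` against `⌈μ⌉ ‖x‖`.
-/

/-- The orthogonal projection of `E` onto the orthogonal complement of
`span {v h : h ∈ I}`, i.e. the projection `I - A_I† A_I` onto the null space of the
row block `A_I` of the matrix `A` whose rows are the vectors `v h`. -/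
noncomputable def projPerp {E : Type*} [NormedAddCommGroup E] [InnerProductSpace ℝ E]
    [FiniteDimensional ℝ E] {m : ℕ} (v : Fin m → E) (I : Set (Fin m)) (x : E) : E :=
  (Submodule.orthogonalProjectionOnto (Submodule.span ℝ (v '' I))ᗮ x : E)

namespace List

variable {F : Type*} [Norm F] {L : List (F → F)}

theorem norm_foldl_apply_le (hL : ∀ f ∈ L, ∀ y, ‖f y‖ ≤ ‖y‖) (x : F) :
    ‖L.foldl (fun y f => f y) x‖ ≤ ‖x‖ := by
  induction L generalizing x with
  | nil => exact le_rfl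
  | cons f L ih =>
    exact (ih (fun g hg => hL g (mem_cons_of_mem f hg)) (f x)).trans (hL f mem_cons_self x)

theorem apply_eq_self_of_norm_foldl_apply_eq (hL : ∀ f ∈ L, ∀ y, ‖f y‖ ≤ ‖y‖)
    (hfix : ∀ f ∈ L, ∀ y, ‖f y‖ = ‖y‖ → f y = y) {x : F}
    (hx : ‖L.foldl (fun y f => f y) x‖ = ‖x‖) : ∀ f ∈ L, f x = x := by
  induction L with
  | nil => simp
  | cons f L ih =>
    have hL' : ∀ g ∈ L, ∀ y, ‖g y‖ ≤ ‖y‖ := fun g hg => hL g (mem_cons_of_mem f hg)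
    have hfx : f x = x := hfix f mem_cons_self x <|
      le_antisymm (hL f mem_cons_self x) (hx ▸ norm_foldl_apply_le hL' (f x))
    rw [foldl_cons, hfx] at hx
    rintro g (_ | ⟨_, hg⟩)
    · exact hfx
    · exact ih hL' (fun g hg => hfix g (mem_cons_of_mem f hg)) hx g hg

end List

theorem norm_sum_smul_lt_of_norm_le {ι F : Type*} [Fintype ι] [SeminormedAddCommGroup F]
    [NormedSpace ℝ F] {w : ι → ℝ} (hw : ∀ i, 0 ≤ w i) {u : ι → F} {r : ℝ}
    (hu : ∀ i, ‖u i‖ ≤ r) {i₀ : ι} (hi₀ : 0 < w i₀) (hlt : ‖u i₀‖ < r) :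
    ‖∑ i, w i • u i‖ < (∑ i, w i) * r :=
  calc ‖∑ i, w i • u i‖
      ≤ ∑ i, ‖w i • u i‖ := norm_sum_le _ _
    _ = ∑ i, w i * ‖u i‖ := by
      simp only [norm_smul, Real.norm_of_nonneg (hw _)]
    _ < ∑ i, w i * r :=
      Finset.sum_lt_sum (fun i _ => mul_le_mul_of_nonneg_left (hu i) (hw i))
        ⟨i₀, Finset.mem_univ _, mul_lt_mul_of_pos_left hlt hi₀⟩
    _ = (∑ i, w i) * r := (Finset.sum_mul _ _ _).symm

theorem Submodule.mem_orthogonal_span_image_iUnion_iff {𝕜 E ι κ : Type*} [RCLike 𝕜]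
    [NormedAddCommGroup E] [InnerProductSpace 𝕜 E] (v : ι → E) {I : κ → Set ι} {x : E} :
    x ∈ (span 𝕜 (v '' ⋃ t, I t))ᗮ ↔ ∀ t, x ∈ (span 𝕜 (v '' I t))ᗮ := by
  rw [Set.image_iUnion, span_iUnion, ← iInf_orthogonal, mem_iInf]

section projPerp

variable {E : Type*} [NormedAddCommGroup E] [InnerProductSpace ℝ E] [FiniteDimensional ℝ E]
  {m : ℕ} (v : Fin m → E)

theorem norm_projPerp_le (I : Set (Fin m)) (x : E) : ‖projPerp v I x‖ ≤ ‖x‖ :=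
  Submodule.norm_starProjection_apply_le _ x

theorem projPerp_eq_self_iff {I : Set (Fin m)} {x : E} :
    projPerp v I x = x ↔ x ∈ (Submodule.span ℝ (v '' I))ᗮ :=
  Submodule.starProjection_eq_self_iff

theorem projPerp_eq_self_of_norm_eq {I : Set (Fin m)} {x : E} (h : ‖projPerp v I x‖ = ‖x‖) :
    projPerp v I x = x :=
  (projPerp_eq_self_iff v).2 <| (Submodule.mem_iff_norm_starProjection _ x).2 h

variable {n : ℕ} (I : Fin n → Set (Fin m))

theorem norm_foldl_projPerp_le (x : E) :
    ‖(List.ofFn fun t => projPerp v (I t)).foldl (fun y f => f y) x‖ ≤ ‖x‖ :=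
  List.norm_foldl_apply_le (by simp [List.mem_ofFn, norm_projPerp_le]) x

theorem norm_foldl_projPerp_lt {x : E} (hx : x ∉ (Submodule.span ℝ (v '' ⋃ t, I t))ᗮ) :
    ‖(List.ofFn fun t => projPerp v (I t)).foldl (fun y f => f y) x‖ < ‖x‖ := by
  refine (norm_foldl_projPerp_le v I x).lt_of_ne fun heq => hx ?_
  have hfix := List.apply_eq_self_of_norm_foldl_apply_eq
    (by simp [List.mem_ofFn, norm_projPerp_le])
    (by simpa [List.mem_ofFn] using fun t y => projPerp_eq_self_of_norm_eq v (I := I t) (x := y))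
    heq
  exact (Submodule.mem_orthogonal_span_image_iUnion_iff v).2 fun t =>
    (projPerp_eq_self_iff v).1 (hfix _ (List.mem_ofFn.2 ⟨t, rfl⟩))

end projPerp

/-- Let `μ = Σ_{q} λ_q · (P_{I^q_{n_q}} ∘ ⋯ ∘ P_{I^q_1})` be a
projection matrix polynomial on `Row(A)` with all weights `λ_q > 0`.  If `μ` is
complete, i.e. some term `q₀` has index sets whose union of rows spans `Row(A)`, then
the operator norm of `μ` restricted to `Row(A)` is strictly less than its weight
`⌈μ⌉ = Σ_q λ_q`: for every nonzero `x ∈ Row(A)`, `‖μ(x)‖ < (Σ_q λ_q)·‖x‖`. -/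
theorem norm_projPolynomial_lt_weight_of_complete
    {E : Type*} [NormedAddCommGroup E] [InnerProductSpace ℝ E] [FiniteDimensional ℝ E]
    {m c : ℕ} (v : Fin m → E)
    (lam : Fin c → ℝ) (hlam : ∀ q, 0 < lam q)
    (nq : Fin c → ℕ) (Is : (q : Fin c) → Fin (nq q) → Set (Fin m))
    (q₀ : Fin c)
    (hcomplete : Submodule.span ℝ (v '' (⋃ t, Is q₀ t)) = Submodule.span ℝ (Set.range v)) :
    ∀ x ∈ Submodule.span ℝ (Set.range v), x ≠ 0 →
      ‖∑ q, lam q • (List.ofFn fun t => projPerp v (Is q t)).foldl (fun y f => f y) x‖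
        < (∑ q, lam q) * ‖x‖ := by
  intro x hx hx0
  have hnotperp : x ∉ (Submodule.span ℝ (v '' ⋃ t, Is q₀ t))ᗮ := fun hperp =>
    hx0 (Submodule.disjoint_def.1 (Submodule.orthogonal_disjoint _) x (hcomplete ▸ hx) hperp)
  exact norm_sum_smul_lt_of_norm_le (fun q => (hlam q).le)
    (fun q => norm_foldl_projPerp_le v (Is q) x) (hlam q₀)
    (norm_foldl_projPerp_lt v (Is q₀) hnotperp)
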